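/- arXiv:2507.16825 — 2 statements merged into one kernel-verified Lean document; each statement's English description precedes it below -/
import Mathlib

section
/- Let n be a positive odd integer. Then ∑_{k=1}^{n-1} (-q)^k/(1-q^k) ≡ -(n-1)/2 - (2/(1-q))·Q_n(2,q) (mod Φ_n(q)). -/
open Finset Polynomial

noncomputable section

/-- The image of a polynomial in the field of rational functions. -/
def toRF (f : Polynomial ℚ) : RatFunc ℚ := algebraMap (Polynomial ℚ) (RatFunc ℚ) f

/-- The `q`-Pochhammer `(q;q)_m = ∏_{i=1}^m (1 - q^i)` as a rational function in `q`. -/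
def qfac (m : ℕ) : RatFunc ℚ := ∏ i ∈ Finset.range m, (1 - RatFunc.X ^ (i + 1))

/-- Gaussian binomial coefficient `[m choose j]_q = (q;q)_m / ((q;q)_j (q;q)_{m-j})`. -/
def qbinom (m j : ℕ) : RatFunc ℚ := qfac m / (qfac j * qfac (m - j))

/-- The `q`-integer `[m]_q = 1 + q + ⋯ + q^{m-1}`. -/
def qint (m : ℕ) : RatFunc ℚ := ∑ i ∈ Finset.range m, RatFunc.X ^ i

/-- The `q`-Fermat quotient `Q_n(2,q) = ((q^2;q^2)_{n-1}/(q;q)_{n-1} - 1)/[n]_q`. -/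
def qFermat (n : ℕ) : RatFunc ℚ :=
  ((∏ i ∈ Finset.range (n - 1), (1 - RatFunc.X ^ (2 * (i + 1)))) /
      (∏ i ∈ Finset.range (n - 1), (1 - RatFunc.X ^ (i + 1))) - 1) / qint n

/-- Congruence of rational functions modulo `Φ_n(q)^e`: the difference can be written as
`Φ_n(q)^e · f / g` with `g` not divisible by `Φ_n(q)`. -/
def phiCong (n e : ℕ) (A B : RatFunc ℚ) : Prop :=
  ∃ f g : Polynomial ℚ, ¬ (Polynomial.cyclotomic n ℚ ∣ g) ∧
    (A - B) * toRF g = toRF ((Polynomial.cyclotomic n ℚ) ^ e * f)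

-- basic toRF facts
lemma toRF_injective : Function.Injective toRF := RatFunc.algebraMap_injective ℚ
lemma toRF_X : toRF Polynomial.X = RatFunc.X := RatFunc.algebraMap_X
lemma toRF_ne_zero {p : Polynomial ℚ} (hp : p ≠ 0) : toRF p ≠ 0 := by
  simpa [toRF] using fun h => hp (toRF_injective (by simpa [toRF] using h))

lemma toRF_one_sub_X_pow (k : ℕ) : toRF (1 - Polynomial.X ^ k) = 1 - RatFunc.X ^ k := by
  simp [toRF, map_sub, map_pow, RatFunc.algebraMap_X]

lemma one_sub_X_pow_ne_zero' (k : ℕ) (hk : 0 < k) : (1 - Polynomial.X ^ k : Polynomial ℚ) ≠ 0 := by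
  intro h
  have := congrArg (Polynomial.eval 0) h
  simp [Polynomial.eval_pow, zero_pow hk.ne'] at this

lemma one_sub_X_pow_ne_zero (k : ℕ) (hk : 0 < k) : (1 - RatFunc.X ^ k : RatFunc ℚ) ≠ 0 := by
  rw [← toRF_one_sub_X_pow]
  exact toRF_ne_zero (one_sub_X_pow_ne_zero' k hk)

-- cyclotomic does not divide 1 - X^k for 0 < k < n
lemma cyclo_not_dvd_one_sub_X_pow {n k : ℕ} (hk : 0 < k) (hkn : k < n) :
    ¬ (Polynomial.cyclotomic n ℚ ∣ (1 - Polynomial.X ^ k)) := by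
  intro h
  have hn : n ≠ 0 := by omega
  set ζ : ℂ := Complex.exp (2 * Real.pi * Complex.I / n)
  have hζ : IsPrimitiveRoot ζ n := Complex.isPrimitiveRoot_exp n hn
  have hroot : Polynomial.IsRoot (Polynomial.cyclotomic n ℂ) ζ :=
    hζ.isRoot_cyclotomic (by omega)
  have hmap : Polynomial.cyclotomic n ℂ ∣ (1 - Polynomial.X ^ k : Polynomial ℂ) := by
    have := Polynomial.map_dvd (algebraMap ℚ ℂ) h
    simpa [Polynomial.map_cyclotomic] using this
  obtain ⟨c, hc⟩ := hmap
  have : (1 - Polynomial.X ^ k : Polynomial ℂ).eval ζ = 0 := by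
    rw [hc]; simp [Polynomial.IsRoot] at hroot ⊢; simp [hroot]
  simp [Polynomial.eval_pow] at this
  exact hζ.pow_ne_one_of_pos_of_lt hk.ne' hkn (by linear_combination -this)

/-- `Φ_n`-regular rational functions: expressible with denominator not divisible by `Φ_n`. -/
def Reg (n : ℕ) (A : RatFunc ℚ) : Prop :=
  ∃ u v : Polynomial ℚ, ¬ (Polynomial.cyclotomic n ℚ ∣ v) ∧ A * toRF v = toRF u

lemma cyclo_prime {n : ℕ} (hn : 0 < n) : Prime (Polynomial.cyclotomic n ℚ) :=
  (Polynomial.cyclotomic.irreducible_rat hn).prime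

lemma cyclo_not_dvd_one {n : ℕ} (hn : 0 < n) : ¬ (Polynomial.cyclotomic n ℚ ∣ 1) :=
  fun h => (cyclo_prime hn).not_unit (isUnit_of_dvd_one h)

lemma Reg.toRF' {n : ℕ} (hn : 0 < n) (p : Polynomial ℚ) : Reg n (toRF p) :=
  ⟨p, 1, cyclo_not_dvd_one hn, by simp [toRF]⟩

lemma Reg.add {n : ℕ} (hn : 0 < n) {A B : RatFunc ℚ} (hA : Reg n A) (hB : Reg n B) :
    Reg n (A + B) := by
  obtain ⟨u1, v1, h1, e1⟩ := hA
  obtain ⟨u2, v2, h2, e2⟩ := hB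
  refine ⟨u1 * v2 + u2 * v1, v1 * v2, ?_, ?_⟩
  · intro h
    rcases (cyclo_prime hn).dvd_mul.mp h with h | h
    exacts [h1 h, h2 h]
  · simp only [toRF, map_mul, map_add] at e1 e2 ⊢
    rw [show (A + B) * (algebraMap (Polynomial ℚ) (RatFunc ℚ) v1 * algebraMap _ _ v2)
        = (A * algebraMap _ _ v1) * algebraMap _ _ v2
          + (B * algebraMap _ _ v2) * algebraMap _ _ v1 by ring, e1, e2]

lemma Reg.mul {n : ℕ} (hn : 0 < n) {A B : RatFunc ℚ} (hA : Reg n A) (hB : Reg n B) :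
    Reg n (A * B) := by
  obtain ⟨u1, v1, h1, e1⟩ := hA
  obtain ⟨u2, v2, h2, e2⟩ := hB
  refine ⟨u1 * u2, v1 * v2, ?_, ?_⟩
  · intro h
    rcases (cyclo_prime hn).dvd_mul.mp h with h | h
    exacts [h1 h, h2 h]
  · simp only [toRF, map_mul] at e1 e2 ⊢
    rw [show A * B * (algebraMap (Polynomial ℚ) (RatFunc ℚ) v1 * algebraMap _ _ v2)
        = (A * algebraMap _ _ v1) * (B * algebraMap _ _ v2) by ring, e1, e2]

lemma Reg.sum {n : ℕ} (hn : 0 < n) {s : Finset ℕ} {F : ℕ → RatFunc ℚ}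
    (h : ∀ i ∈ s, Reg n (F i)) : Reg n (∑ i ∈ s, F i) := by
  classical
  induction s using Finset.induction_on with
  | empty => exact ⟨0, 1, cyclo_not_dvd_one hn, by simp [toRF]⟩
  | insert _ _ hx ih =>
    rw [Finset.sum_insert hx]
    exact Reg.add hn (h _ (Finset.mem_insert_self _ _))
      (ih fun i hi => h i (Finset.mem_insert_of_mem hi))

lemma Reg.prod {n : ℕ} (hn : 0 < n) {s : Finset ℕ} {F : ℕ → RatFunc ℚ}
    (h : ∀ i ∈ s, Reg n (F i)) : Reg n (∏ i ∈ s, F i) := by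
  classical
  induction s using Finset.induction_on with
  | empty => exact ⟨1, 1, cyclo_not_dvd_one hn, by simp [toRF]⟩
  | insert _ _ hx ih =>
    rw [Finset.prod_insert hx]
    exact Reg.mul hn (h _ (Finset.mem_insert_self _ _))
      (ih fun i hi => h i (Finset.mem_insert_of_mem hi))

lemma Reg.one {n : ℕ} (hn : 0 < n) : Reg n 1 := ⟨1, 1, cyclo_not_dvd_one hn, by simp [toRF]⟩

lemma Reg.D {n k : ℕ} (hk : 0 < k) (hkn : k < n) :
    Reg n (RatFunc.X ^ k / (1 - RatFunc.X ^ k)) := by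
  refine ⟨Polynomial.X ^ k, 1 - Polynomial.X ^ k, cyclo_not_dvd_one_sub_X_pow hk hkn, ?_⟩
  rw [toRF_one_sub_X_pow, div_mul_cancel₀ _ (one_sub_X_pow_ne_zero k hk)]
  simp [toRF, map_pow, RatFunc.algebraMap_X]

lemma Reg.inv_one_sub {n k : ℕ} (hk : 0 < k) (hkn : k < n) :
    Reg n (1 / ((1 - RatFunc.X ^ k))) := by
  refine ⟨1, 1 - Polynomial.X ^ k, cyclo_not_dvd_one_sub_X_pow hk hkn, ?_⟩
  rw [toRF_one_sub_X_pow, one_div, inv_mul_cancel₀ (one_sub_X_pow_ne_zero k hk)]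
  simp [toRF]

lemma telescope (t : RatFunc ℚ) (c : ℕ → RatFunc ℚ) (s : ℕ) :
    ∏ i ∈ Finset.range s, (1 + t * c i) - 1
      = t * ∑ i ∈ Finset.range s, c i * ∏ j ∈ Finset.range i, (1 + t * c j) := by
  induction s with
  | zero => simp
  | succ s ih =>
    rw [Finset.prod_range_succ, Finset.sum_range_succ]
    linear_combination ih

lemma sum_Icc_oddeven (F : ℕ → RatFunc ℚ) (m : ℕ) :
    ∑ k ∈ Finset.Icc 1 (2*m), F k = ∑ i ∈ Finset.range m, (F (2*i+1) + F (2*i+2)) := by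
  induction m with
  | zero => simp
  | succ m ih =>
    rw [show 2*(m+1) = (2*m+1)+1 by omega, Finset.sum_Icc_succ_top (by omega),
      Finset.sum_Icc_succ_top (by omega), ih, Finset.sum_range_succ,
      show (2*m+1)+1 = 2*m+2 by omega]
    ring

lemma sum_Icc_reflect (F : ℕ → RatFunc ℚ) (m : ℕ) :
    ∑ k ∈ Finset.Icc 1 (2*m), F k = ∑ i ∈ Finset.range m, (F (i+1) + F (2*m - i)) := by
  have h1 : Finset.Icc 1 (2*m) = Finset.Icc 1 m ∪ Finset.Icc (m+1) (2*m) := by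
    ext k; simp only [Finset.mem_Icc, Finset.mem_union]; omega
  have h2 : Disjoint (Finset.Icc 1 m) (Finset.Icc (m+1) (2*m)) := by
    rw [Finset.disjoint_left]; intro k hk hk'
    simp only [Finset.mem_Icc] at hk hk'; omega
  rw [h1, Finset.sum_union h2, Finset.sum_add_distrib]
  congr 1
  · rw [show Finset.Icc 1 m = Finset.Ico 1 (m+1) by rfl, Finset.sum_Ico_eq_sum_range]
    simp only [Nat.add_sub_cancel]
    exact Finset.sum_congr rfl fun i _ => by rw [Nat.add_comm]
  · refine Finset.sum_nbij' (fun k => 2*m - k) (fun i => 2*m - i) ?_ ?_ ?_ ?_ ?_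
    · intro a ha; simp only [Finset.mem_Icc, Finset.mem_range] at *; omega
    · intro a ha; simp only [Finset.mem_Icc, Finset.mem_range] at *; omega
    · intro a ha; simp only [Finset.mem_Icc] at ha; omega
    · intro a ha; simp only [Finset.mem_range] at ha; omega
    · intro a ha; simp only [Finset.mem_Icc] at ha
      congr 1; omega

lemma prod_range_even_odd (H : ℕ → RatFunc ℚ) (m : ℕ) :
    ∏ i ∈ Finset.range (2*m), H (i+1)
      = (∏ i ∈ Finset.range m, H (2*i+1)) * ∏ i ∈ Finset.range m, H (2*i+2) := by
  induction m with
  | zero => simp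
  | succ m ih =>
    rw [show 2*(m+1) = (2*m)+1+1 by omega, Finset.prod_range_succ, Finset.prod_range_succ, ih,
      Finset.prod_range_succ, Finset.prod_range_succ, show 2*m+1+1 = 2*m+2 by omega]
    ring

lemma pair_identity (a b c : RatFunc ℚ) (ha : 1 - a ≠ 0) (hb : 1 - b ≠ 0) (h : a * b = c) :
    a / (1 - a) + b / (1 - b) + 1 = (1 - c) * (1 / ((1 - a) * (1 - b))) := by
  subst h
  field_simp
  ring

lemma factor_identity (a c : RatFunc ℚ) (ha : 1 - a ≠ 0) :
    1 - a * c = (1 - a) * (1 + (1 - c) * (a / (1 - a))) := by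
  field_simp
  ring

/-- `D k = q^k/(1-q^k)`. -/
def Dk (k : ℕ) : RatFunc ℚ := RatFunc.X ^ k / (1 - RatFunc.X ^ k)

/-- `t = 1 - q^n` for `n = 2m+1`. -/
def tt (m : ℕ) : RatFunc ℚ := 1 - RatFunc.X ^ (2*m+1)

lemma lemA (m : ℕ) :
    ∑ k ∈ Finset.Icc 1 (2*m), (-RatFunc.X : RatFunc ℚ) ^ k / (1 - RatFunc.X ^ k)
      = ∑ i ∈ Finset.range m, (-(Dk (2*i+1)) + Dk (2*i+2)) := by
  have h := sum_Icc_oddeven (fun k => (-RatFunc.X : RatFunc ℚ) ^ k / (1 - RatFunc.X ^ k)) m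
  rw [h]
  refine Finset.sum_congr rfl fun i _ => ?_
  have h1 : (-RatFunc.X : RatFunc ℚ) ^ (2*i+1) = -(RatFunc.X ^ (2*i+1)) :=
    Odd.neg_pow ⟨i, by omega⟩ _
  have h2 : (-RatFunc.X : RatFunc ℚ) ^ (2*i+2) = RatFunc.X ^ (2*i+2) :=
    Even.neg_pow ⟨i+1, by omega⟩ _
  rw [h1, h2, neg_div]
  rfl

lemma lemRatio (m : ℕ) :
    (∏ i ∈ Finset.range (2*m), (1 - RatFunc.X ^ (2*(i+1))) : RatFunc ℚ)
      = (∏ i ∈ Finset.range (2*m), (1 - RatFunc.X ^ (i+1)))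
        * ∏ i ∈ Finset.range m, (1 + tt m * Dk (2*i+1)) := by
  have h1 : ∏ i ∈ Finset.range (2*m), (1 - RatFunc.X ^ (2*(i+1)) : RatFunc ℚ)
      = (∏ i ∈ Finset.range m, (1 - RatFunc.X ^ (2*i+2)))
        * ∏ i ∈ Finset.range m, ((1 - RatFunc.X ^ (2*i+1)) * (1 + tt m * Dk (2*i+1))) := by
    have hA : ∏ i ∈ Finset.range m, (1 - RatFunc.X ^ (2*(i+1)) : RatFunc ℚ)
        = ∏ i ∈ Finset.range m, (1 - RatFunc.X ^ (2*i+2) : RatFunc ℚ) :=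
      Finset.prod_congr rfl fun i _ => by rw [show 2*(i+1) = 2*i+2 from by omega]
    have hB : ∏ i ∈ Finset.range m, (1 - RatFunc.X ^ (2*(m+i+1)) : RatFunc ℚ)
        = ∏ i ∈ Finset.range m, ((1 - RatFunc.X ^ (2*i+1)) * (1 + tt m * Dk (2*i+1))) := by
      refine Finset.prod_congr rfl fun i _ => ?_
      have hpow : (RatFunc.X : RatFunc ℚ) ^ (2*i+1) * RatFunc.X ^ (2*m+1)
          = RatFunc.X ^ (2*(m+i+1)) := by
        rw [← pow_add]; congr 1; omega
      rw [← hpow]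
      exact factor_identity _ _ (one_sub_X_pow_ne_zero _ (by omega))
    rw [show 2*m = m + m from by omega, Finset.prod_range_add, hA, hB]
  have h2 := prod_range_even_odd (fun k => (1 : RatFunc ℚ) - RatFunc.X ^ k) m
  rw [h1, Finset.prod_mul_distrib, h2]
  ring

lemma lemB (m : ℕ) :
    2 / (1 - RatFunc.X) * qFermat (2*m+1)
      = 2 * ∑ i ∈ Finset.range m, Dk (2*i+1) * ∏ j ∈ Finset.range i, (1 + tt m * Dk (2*j+1)) := by
  have hP1ne : (∏ i ∈ Finset.range (2*m), (1 - RatFunc.X ^ (i+1)) : RatFunc ℚ) ≠ 0 :=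
    Finset.prod_ne_zero_iff.mpr fun i _ => one_sub_X_pow_ne_zero _ (by omega)
  have hqint : (1 - RatFunc.X) * qint (2*m+1) = tt m := by
    have h := geom_sum_mul (RatFunc.X : RatFunc ℚ) (2*m+1)
    simp only [qint, tt]
    linear_combination -h
  have htt0 : tt m ≠ 0 := one_sub_X_pow_ne_zero _ (by omega)
  have hqint0 : qint (2*m+1) ≠ 0 := fun h => htt0 (by rw [← hqint, h, mul_zero])
  have htel := telescope (tt m) (fun k => Dk (2*k+1)) m
  simp only [] at htel
  simp only [qFermat, show (2*m+1)-1 = 2*m from by omega]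
  rw [lemRatio m, mul_comm (∏ i ∈ Finset.range (2*m), (1 - RatFunc.X ^ (i+1)) : RatFunc ℚ),
    mul_div_assoc, div_self hP1ne, mul_one, htel]
  rw [div_mul_div_comm, hqint]
  rw [show (2 : RatFunc ℚ) * (tt m * ∑ i ∈ Finset.range m,
        Dk (2*i+1) * ∏ j ∈ Finset.range i, (1 + tt m * Dk (2*j+1)))
      = (2 * ∑ i ∈ Finset.range m,
        Dk (2*i+1) * ∏ j ∈ Finset.range i, (1 + tt m * Dk (2*j+1))) * tt m from by ring,
    mul_div_assoc, div_self htt0, mul_one]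

/-- The regular cofactor `W`. -/
def Wm (m : ℕ) : RatFunc ℚ :=
  (∑ i ∈ Finset.range m, 1 / ((1 - RatFunc.X ^ (i+1)) * (1 - RatFunc.X ^ (2*m - i))))
  + 2 * ∑ i ∈ Finset.range m, Dk (2*i+1)
      * ∑ j ∈ Finset.range i, Dk (2*j+1) * ∏ l ∈ Finset.range j, (1 + tt m * Dk (2*l+1))

lemma lemKey (m : ℕ) :
    (∑ k ∈ Finset.Icc 1 (2*m), (-RatFunc.X : RatFunc ℚ) ^ k / (1 - RatFunc.X ^ k))
      - (-RatFunc.C ((((2*m+1 : ℕ) : ℚ) - 1) / 2) - 2 / (1 - RatFunc.X) * qFermat (2*m+1))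
    = tt m * Wm m := by
  rw [lemA, lemB]
  have hC : RatFunc.C ((((2*m+1 : ℕ) : ℚ) - 1) / 2) = ((m : ℕ) : RatFunc ℚ) := by
    rw [show (((2*m+1 : ℕ) : ℚ) - 1) / 2 = ((m : ℕ) : ℚ) from by push_cast; ring]
    exact map_natCast (RatFunc.C : ℚ →+* RatFunc ℚ) m
  rw [hC]
  have hpair : ∀ i ∈ Finset.range m,
      tt m * (1 / ((1 - RatFunc.X ^ (i+1)) * (1 - RatFunc.X ^ (2*m - i))))
        = Dk (i+1) + Dk (2*m - i) + 1 := by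
    intro i hi
    simp only [Finset.mem_range] at hi
    have hab : RatFunc.X ^ (i+1) * RatFunc.X ^ (2*m - i) = (RatFunc.X : RatFunc ℚ) ^ (2*m+1) := by
      rw [← pow_add]; congr 1; omega
    exact (pair_identity _ _ _ (one_sub_X_pow_ne_zero _ (by omega))
      (one_sub_X_pow_ne_zero _ (by omega)) hab).symm
  have e1 : ∑ i ∈ Finset.range m, (-(Dk (2*i+1)) + Dk (2*i+2))
      = -(∑ i ∈ Finset.range m, Dk (2*i+1)) + ∑ i ∈ Finset.range m, Dk (2*i+2) := by
    rw [Finset.sum_add_distrib, Finset.sum_neg_distrib]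
  have e2 : tt m * ∑ i ∈ Finset.range m,
        1 / ((1 - RatFunc.X ^ (i+1)) * (1 - RatFunc.X ^ (2*m - i)))
      = ∑ i ∈ Finset.range m, (Dk (i+1) + Dk (2*m - i)) + (m : RatFunc ℚ) := by
    rw [Finset.mul_sum, Finset.sum_congr rfl hpair, Finset.sum_add_distrib,
      Finset.sum_const, Finset.card_range, nsmul_eq_mul, mul_one]
  have e3 : tt m * ∑ i ∈ Finset.range m, Dk (2*i+1)
        * ∑ j ∈ Finset.range i, Dk (2*j+1) * ∏ l ∈ Finset.range j, (1 + tt m * Dk (2*l+1))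
      = ∑ i ∈ Finset.range m, Dk (2*i+1) * ∏ j ∈ Finset.range i, (1 + tt m * Dk (2*j+1))
        - ∑ i ∈ Finset.range m, Dk (2*i+1) := by
    rw [Finset.mul_sum, ← Finset.sum_sub_distrib]
    refine Finset.sum_congr rfl fun i _ => ?_
    have h := telescope (tt m) (fun k => Dk (2*k+1)) i
    simp only [] at h
    linear_combination (-Dk (2*i+1)) * h
  have e4 : ∑ i ∈ Finset.range m, (Dk (2*i+1) + Dk (2*i+2))
      = ∑ i ∈ Finset.range m, (Dk (i+1) + Dk (2*m - i)) := by
    rw [← sum_Icc_oddeven Dk m, ← sum_Icc_reflect Dk m]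
  have e5 : ∑ i ∈ Finset.range m, (Dk (2*i+1) + Dk (2*i+2))
      = ∑ i ∈ Finset.range m, Dk (2*i+1) + ∑ i ∈ Finset.range m, Dk (2*i+2) :=
    Finset.sum_add_distrib
  rw [Wm]
  linear_combination e1 - e2 - 2*e3 + e4 - e5

lemma lemReg (m : ℕ) : Reg (2*m+1) (Wm m) := by
  have hn : 0 < 2*m+1 := by omega
  have hDk : ∀ k, 0 < k → k < 2*m+1 → Reg (2*m+1) (Dk k) := fun k h1 h2 => Reg.D h1 h2
  have htt : Reg (2*m+1) (tt m) := by
    rw [tt, ← toRF_one_sub_X_pow]; exact Reg.toRF' hn _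
  have hfactor : ∀ l, l < m → Reg (2*m+1) (1 + tt m * Dk (2*l+1)) := fun l hl =>
    Reg.add hn (Reg.one hn) (Reg.mul hn htt (hDk _ (by omega) (by omega)))
  have hS2 : Reg (2*m+1) (∑ i ∈ Finset.range m, Dk (2*i+1)
      * ∑ j ∈ Finset.range i, Dk (2*j+1) * ∏ l ∈ Finset.range j, (1 + tt m * Dk (2*l+1))) := by
    refine Reg.sum hn fun i hi => ?_
    simp only [Finset.mem_range] at hi
    refine Reg.mul hn (hDk _ (by omega) (by omega)) (Reg.sum hn fun j hj => ?_)
    simp only [Finset.mem_range] at hj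
    refine Reg.mul hn (hDk _ (by omega) (by omega)) (Reg.prod hn fun l hl => ?_)
    simp only [Finset.mem_range] at hl
    exact hfactor l (by omega)
  have h2 : Reg (2*m+1) (2 : RatFunc ℚ) := ⟨2, 1, cyclo_not_dvd_one hn, by simp [toRF]; rw [map_ofNat]⟩
  rw [Wm]
  refine Reg.add hn (Reg.sum hn fun i hi => ?_) (Reg.mul hn h2 hS2)
  simp only [Finset.mem_range] at hi
  rw [show (1:RatFunc ℚ)/((1 - RatFunc.X^(i+1))*(1 - RatFunc.X^(2*m-i)))
      = (1/(1 - RatFunc.X^(i+1)))*(1/(1 - RatFunc.X^(2*m-i))) from by simp [one_div, mul_inv]; ring]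
  exact Reg.mul hn (Reg.inv_one_sub (by omega) (by omega))
    (Reg.inv_one_sub (by omega) (by omega))

theorem stmt_5 (n : ℕ) (hn : 0 < n) (hodd : Odd n) :
    phiCong n 1 (∑ k ∈ Finset.Icc 1 (n - 1), (-RatFunc.X : RatFunc ℚ) ^ k / (1 - RatFunc.X ^ k))
      (-RatFunc.C (((n : ℚ) - 1) / 2) - (2 / (1 - RatFunc.X)) * qFermat n) := by
  obtain ⟨m, rfl⟩ := hodd
  obtain ⟨u, v, hv, huv⟩ := lemReg m
  obtain ⟨c, hc⟩ := Polynomial.cyclotomic.dvd_X_pow_sub_one (2*m+1) ℚ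
  refine ⟨-(c*u), v, hv, ?_⟩
  rw [show 2*m+1-1 = 2*m from by omega, lemKey m, mul_assoc, huv,
    show tt m = toRF (1 - Polynomial.X^(2*m+1)) from (toRF_one_sub_X_pow _).symm]
  unfold toRF
  rw [← map_mul]
  congr 1
  rw [pow_one]
  linear_combination (-u) * hc
end
end

section
/- Let n be a positive odd integer and α a positive even integer with α < n. Then ∑_{k=1}^{n-1} (-q)^k/(1-q^{k+α}) ≡ (1/(q^α(1-q)))·((1-n)(1-q)/2 - 2Q_n(2,q) - 2∑_{k=1}^{α} (-q)^k/[k]_q - q^n·(1-q)/(1-q^n) + q^α/[α]_q) (mod Φ_n(q)), where the term with 1/(1-q^n) is interpreted as in the paper (the principal parts at roots of Φ_n(q) of both sides agree). -/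
open Finset Polynomial

noncomputable section

section REframework
variable {K : Type*} [Field K] [Algebra ℚ K]

/-- `h` is regular at `ζ` with value `v`. -/
def RE (ζ : K) (h : RatFunc ℚ) (v : K) : Prop :=
  ∃ p r : Polynomial ℚ, h * toRF r = toRF p ∧ (Polynomial.aeval ζ) r ≠ 0 ∧
    (Polynomial.aeval ζ) p = v * (Polynomial.aeval ζ) r

theorem RE_toRF (ζ : K) (p : Polynomial ℚ) : RE ζ (toRF p) (Polynomial.aeval ζ p) :=
  ⟨p, 1, by simp [toRF], by simp, by simp⟩

theorem RE_X (ζ : K) : RE ζ RatFunc.X ζ := by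
  simpa [toRF, RatFunc.algebraMap_X] using RE_toRF ζ Polynomial.X

theorem RE_one (ζ : K) : RE ζ 1 1 := by simpa [toRF] using RE_toRF ζ 1

theorem RE_C (ζ : K) (c : ℚ) : RE ζ (RatFunc.C c) (algebraMap ℚ K c) := by
  simpa [toRF, RatFunc.algebraMap_C] using RE_toRF ζ (Polynomial.C c)

theorem RE.add {ζ : K} {h₁ h₂ v₁ v₂} (H₁ : RE ζ h₁ v₁) (H₂ : RE ζ h₂ v₂) :
    RE ζ (h₁ + h₂) (v₁ + v₂) := by
  obtain ⟨p₁, r₁, e₁, n₁, w₁⟩ := H₁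
  obtain ⟨p₂, r₂, e₂, n₂, w₂⟩ := H₂
  refine ⟨p₁ * r₂ + p₂ * r₁, r₁ * r₂, ?_, ?_, ?_⟩
  · simp only [toRF, map_add, map_mul] at *
    linear_combination (algebraMap (Polynomial ℚ) (RatFunc ℚ) r₂) * e₁ +
      (algebraMap (Polynomial ℚ) (RatFunc ℚ) r₁) * e₂
  · simp only [map_mul]; exact mul_ne_zero n₁ n₂
  · simp only [map_add, map_mul]
    linear_combination (Polynomial.aeval ζ) r₂ * w₁ + (Polynomial.aeval ζ) r₁ * w₂

theorem RE.mul {ζ : K} {h₁ h₂ v₁ v₂} (H₁ : RE ζ h₁ v₁) (H₂ : RE ζ h₂ v₂) :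
    RE ζ (h₁ * h₂) (v₁ * v₂) := by
  obtain ⟨p₁, r₁, e₁, n₁, w₁⟩ := H₁
  obtain ⟨p₂, r₂, e₂, n₂, w₂⟩ := H₂
  refine ⟨p₁ * p₂, r₁ * r₂, ?_, ?_, ?_⟩
  · simp only [toRF, map_mul] at *
    linear_combination (algebraMap (Polynomial ℚ) (RatFunc ℚ) r₁ * h₁) * e₂ +
      (algebraMap (Polynomial ℚ) (RatFunc ℚ) p₂) * e₁
  · simp only [map_mul]; exact mul_ne_zero n₁ n₂
  · simp only [map_mul]
    linear_combination ((Polynomial.aeval ζ) r₁ * v₁) * w₂ + (Polynomial.aeval ζ) p₂ * w₁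

theorem RE.neg {ζ : K} {h v} (H : RE ζ h v) : RE ζ (-h) (-v) := by
  have := (RE_C ζ (-1)).mul H
  simpa [map_neg] using this

theorem RE.sub {ζ : K} {h₁ h₂ v₁ v₂} (H₁ : RE ζ h₁ v₁) (H₂ : RE ζ h₂ v₂) :
    RE ζ (h₁ - h₂) (v₁ - v₂) := by
  simpa [sub_eq_add_neg] using H₁.add H₂.neg

theorem RE.div {ζ : K} {h₁ h₂ v₁ v₂} (H₁ : RE ζ h₁ v₁) (H₂ : RE ζ h₂ v₂) (hv₂ : v₂ ≠ 0) :
    RE ζ (h₁ / h₂) (v₁ / v₂) := by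
  obtain ⟨p₁, r₁, e₁, n₁, w₁⟩ := H₁
  obtain ⟨p₂, r₂, e₂, n₂, w₂⟩ := H₂
  have hap₂ : (Polynomial.aeval ζ) p₂ ≠ 0 := by
    rw [w₂]; exact mul_ne_zero hv₂ n₂
  have hp₂ : p₂ ≠ 0 := by rintro rfl; simp at hap₂
  have htp₂ : toRF p₂ ≠ 0 := RatFunc.algebraMap_ne_zero hp₂
  have hh₂ : h₂ ≠ 0 := by
    rintro rfl; rw [zero_mul] at e₂; exact htp₂ e₂.symm
  refine ⟨p₁ * r₂, r₁ * p₂, ?_, ?_, ?_⟩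
  · simp only [toRF, map_mul] at *
    rw [← e₁, ← e₂]
    field_simp
  · simp only [map_mul]; exact mul_ne_zero n₁ hap₂
  · simp only [map_mul]
    rw [w₁, w₂]
    field_simp

theorem RE.sum {ζ : K} {ι : Type*} {s : Finset ι} {f : ι → RatFunc ℚ} {v : ι → K}
    (H : ∀ i ∈ s, RE ζ (f i) (v i)) :
    RE ζ (∑ i ∈ s, f i) (∑ i ∈ s, v i) := by
  classical
  induction s using Finset.cons_induction with
  | empty => simpa [toRF] using RE_toRF ζ 0
  | cons a s' hx ih =>
      rw [Finset.sum_cons, Finset.sum_cons]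
      exact (H a (by simp)).add (ih fun i hi => H i (by simp [hi]))

theorem RE.pow {ζ : K} {h v} (H : RE ζ h v) (m : ℕ) : RE ζ (h ^ m) (v ^ m) := by
  induction m with
  | zero => simpa using RE_one ζ
  | succ m ih => rw [pow_succ, pow_succ]; exact ih.mul H

theorem RE_two (ζ : K) : RE ζ (2 : RatFunc ℚ) 2 := by
  have h := (RE_one ζ).add (RE_one ζ)
  norm_num at h
  exact h

theorem RE.congr {ζ : K} {x y : RatFunc ℚ} {v : K} (H : RE ζ x v) (e : y = x) : RE ζ y v :=
  e ▸ H

theorem RE_qint (ζ : K) (m : ℕ) : RE ζ (qint m) (∑ i ∈ Finset.range m, ζ ^ i) := by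
  have e : qint m = ∑ i ∈ Finset.range m, RatFunc.X ^ i := rfl
  rw [e]
  exact RE.sum fun i _ => (RE_X ζ).pow i

end REframework

-- ---------- misc helpers ----------

theorem one_sub_X_pow_ne {m : ℕ} (hm : 0 < m) : (1 - RatFunc.X ^ m : RatFunc ℚ) ≠ 0 := by
  have hp : (1 - Polynomial.X ^ m : Polynomial ℚ) ≠ 0 := by
    intro h
    have := congrArg (Polynomial.eval 0) h
    simp [zero_pow hm.ne'] at this
  have := RatFunc.algebraMap_ne_zero (K := ℚ) hp
  simpa [map_sub, map_one, map_pow, RatFunc.algebraMap_X] using this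

theorem qint_ne {m : ℕ} (hm : 0 < m) : qint m ≠ 0 := by
  have h := geom_sum_mul (RatFunc.X : RatFunc ℚ) m
  have h2 : qint m * (RatFunc.X - 1) = RatFunc.X ^ m - 1 := h
  intro h0
  rw [h0, zero_mul] at h2
  have : (1 - RatFunc.X ^ m : RatFunc ℚ) = 0 := by linear_combination h2
  exact one_sub_X_pow_ne hm this

theorem one_sub_X_qint (m : ℕ) : (1 - RatFunc.X) * qint m = 1 - RatFunc.X ^ m := by
  have h := geom_sum_mul (RatFunc.X : RatFunc ℚ) m
  have h2 : qint m * (RatFunc.X - 1) = RatFunc.X ^ m - 1 := h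
  linear_combination -h2

theorem sum_Icc_one {M : Type*} [AddCommMonoid M] (m : ℕ) (g : ℕ → M) :
    ∑ k ∈ Finset.Icc 1 m, g k = ∑ i ∈ Finset.range m, g (1 + i) := by
  rw [← Finset.Ico_add_one_right_eq_Icc, Finset.sum_Ico_eq_sum_range]
  simp

@[to_additive sum_range_two_mul]
theorem prod_range_two_mul {M : Type*} [CommMonoid M] (h : ℕ) (f : ℕ → M) :
    ∏ i ∈ Finset.range (2 * h), f i
      = (∏ j ∈ Finset.range h, f (2 * j)) * ∏ j ∈ Finset.range h, f (2 * j + 1) := by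
  induction h with
  | zero => simp
  | succ h ih =>
      have e : 2 * (h + 1) = 2 * h + 1 + 1 := by ring
      rw [e, Finset.prod_range_succ, Finset.prod_range_succ, ih,
        Finset.prod_range_succ, Finset.prod_range_succ]
      ac_rfl

section Kfacts

variable {K : Type*} [Field K] [Algebra ℚ K] {n : ℕ} {ζ : K}

theorem pair_inv (hζn : ζ ^ n = 1) {a b : ℕ} (hab : a + b = n)
    (ha : ζ ^ a ≠ 1) (hb : ζ ^ b ≠ 1) :
    (1 - ζ ^ a)⁻¹ + (1 - ζ ^ b)⁻¹ = 1 := by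
  have h1 : ζ ^ a * ζ ^ b = 1 := by rw [← pow_add, hab, hζn]
  have ha' : (1 : K) - ζ ^ a ≠ 0 := sub_ne_zero.mpr (fun h => ha h.symm)
  have hb' : (1 : K) - ζ ^ b ≠ 0 := sub_ne_zero.mpr (fun h => hb h.symm)
  field_simp
  linear_combination -h1

theorem W_eq (hζ : IsPrimitiveRoot ζ n) {h : ℕ} (hn2 : n = 2 * h + 1) :
    ∑ i ∈ Finset.range (2 * h), (1 - ζ ^ (i + 1))⁻¹ = (h : K) := by
  haveI : CharZero K := charZero_of_injective_algebraMap (algebraMap ℚ K).injective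
  have hne : ∀ m : ℕ, 0 < m → m < n → ζ ^ m ≠ 1 := fun m h1 h2 =>
    hζ.pow_ne_one_of_pos_of_lt h1.ne' h2
  have hζn : ζ ^ n = 1 := hζ.pow_eq_one
  set W := ∑ i ∈ Finset.range (2 * h), (1 - ζ ^ (i + 1))⁻¹ with hW
  have refl := Finset.sum_range_reflect (fun i => (1 - ζ ^ (i + 1))⁻¹) (2 * h)
  have key : W + W = 2 * (h : K) := by
    nth_rewrite 2 [hW]
    rw [← refl, ← Finset.sum_add_distrib]
    have : ∀ i ∈ Finset.range (2 * h),
        (1 - ζ ^ (i + 1))⁻¹ + (1 - ζ ^ (2 * h - 1 - i + 1))⁻¹ = 1 := by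
      intro i hi
      rw [Finset.mem_range] at hi
      have e1 : 2 * h - 1 - i + 1 = 2 * h - i := by omega
      rw [e1]
      exact pair_inv hζn (by omega) (hne _ (by omega) (by omega)) (hne _ (by omega) (by omega))
    rw [Finset.sum_congr rfl this]
    simp [mul_comm]
  have h2 : (2 : K) * W = 2 * (h : K) := by linear_combination key
  exact mul_left_cancel₀ (two_ne_zero) h2

theorem star_eq (hζ : IsPrimitiveRoot ζ n) {h : ℕ} (hn2 : n = 2 * h + 1) :
    ∑ i ∈ Finset.range (2 * h), (-ζ) ^ (1 + i) / (1 - ζ ^ (1 + i))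
      = -(h : K) - 2 * ∑ j ∈ Finset.range h, ζ ^ (2 * j + 1) / (1 - ζ ^ (2 * j + 1)) := by
  have hne : ∀ m : ℕ, 0 < m → m < n → (1 : K) - ζ ^ m ≠ 0 := fun m h1 h2 =>
    sub_ne_zero.mpr (fun e => hζ.pow_ne_one_of_pos_of_lt h1.ne' h2 e.symm)
  -- rewrite LHS summand and split even/odd
  have split := sum_range_two_mul h (fun i => (-ζ) ^ (1 + i) / (1 - ζ ^ (1 + i)))
  rw [split]
  have hW := W_eq hζ hn2
  have splitW := sum_range_two_mul h (fun i => (1 - ζ ^ (i + 1))⁻¹)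
  rw [splitW] at hW
  -- pointwise rewrites
  have e1 : ∀ j ∈ Finset.range h,
      (-ζ) ^ (1 + 2 * j) / (1 - ζ ^ (1 + 2 * j)) = -( (1 - ζ ^ (2 * j + 1))⁻¹ - 1) := by
    intro j hj
    rw [Finset.mem_range] at hj
    have hz := hne (2 * j + 1) (by omega) (by omega)
    have ho : Odd (1 + 2 * j) := ⟨j, by ring⟩
    rw [ho.neg_pow]
    have e : 1 + 2 * j = 2 * j + 1 := by ring
    rw [e]
    field_simp
    ring
  have e2 : ∀ j ∈ Finset.range h,
      (-ζ) ^ (1 + (2 * j + 1)) / (1 - ζ ^ (1 + (2 * j + 1)))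
        = (1 - ζ ^ (2 * j + 1 + 1))⁻¹ - 1 := by
    intro j hj
    rw [Finset.mem_range] at hj
    have hz : (1:K) - ζ ^ (2 * j + 1 + 1) ≠ 0 := by
      have := hne (2 * j + 1 + 1) (by omega) (by omega); exact this
    have he : Even (1 + (2 * j + 1)) := ⟨j + 1, by ring⟩
    rw [he.neg_pow]
    have e : 1 + (2 * j + 1) = 2 * j + 1 + 1 := by ring
    rw [e]
    field_simp
    ring
  have e3 : ∀ j ∈ Finset.range h,
      ζ ^ (2 * j + 1) / (1 - ζ ^ (2 * j + 1)) = (1 - ζ ^ (2 * j + 1))⁻¹ - 1 := by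
    intro j hj
    rw [Finset.mem_range] at hj
    have hz := hne (2 * j + 1) (by omega) (by omega)
    field_simp
    ring
  rw [Finset.sum_congr rfl e1, Finset.sum_congr rfl e2, Finset.sum_congr rfl e3]
  simp only [Finset.sum_neg_distrib, Finset.sum_sub_distrib, Finset.sum_const,
    Finset.card_range, nsmul_eq_mul, mul_one]
  linear_combination hW

end Kfacts

-- ---------- bridge to phiCong ----------

section Bridge

variable (n : ℕ)

theorem adjoinRoot_primitive (hn : 0 < n) [Fact (Irreducible (Polynomial.cyclotomic n ℚ))] :
    IsPrimitiveRoot (AdjoinRoot.root (Polynomial.cyclotomic n ℚ)) n := by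
  set K := AdjoinRoot (Polynomial.cyclotomic n ℚ)
  haveI : CharZero K := charZero_of_injective_algebraMap (algebraMap ℚ K).injective
  haveI : NeZero ((n : K)) := ⟨by exact_mod_cast Nat.cast_ne_zero.mpr hn.ne'⟩
  have h0 : (Polynomial.cyclotomic n K).IsRoot (AdjoinRoot.root (Polynomial.cyclotomic n ℚ)) := by
    rw [Polynomial.IsRoot, ← Polynomial.map_cyclotomic n (algebraMap ℚ K), Polynomial.eval_map,
      ← Polynomial.aeval_def]
    erw [AdjoinRoot.aeval_eq, AdjoinRoot.mk_self]
  exact (Polynomial.isRoot_cyclotomic_iff).mp h0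

theorem phiCong_of_RE [Fact (Irreducible (Polynomial.cyclotomic n ℚ))] (A B : RatFunc ℚ)
    (H : RE (AdjoinRoot.root (Polynomial.cyclotomic n ℚ)) (A - B) 0) : phiCong n 1 A B := by
  obtain ⟨p, r, e, nr, w⟩ := H
  rw [zero_mul] at w
  have hp : Polynomial.cyclotomic n ℚ ∣ p := by
    erw [AdjoinRoot.aeval_eq, AdjoinRoot.mk_eq_zero] at w; exact w
  have hr : ¬ Polynomial.cyclotomic n ℚ ∣ r := by
    intro hd
    exact nr (by erw [AdjoinRoot.aeval_eq, AdjoinRoot.mk_eq_zero]; exact hd)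
  obtain ⟨c, rfl⟩ := hp
  exact ⟨c, r, hr, by simpa [pow_one] using e⟩

end Bridge

-- ---------- qFermat ----------

section QF

variable {K : Type*} [Field K] [Algebra ℚ K]

theorem prod_one_add_sq (ζ : K) {ι : Type} (s : Finset ι) (t : RatFunc ℚ) (vt : K)
    (ht : RE ζ t vt) (u : ι → RatFunc ℚ) (w : ι → K) (hu : ∀ i ∈ s, RE ζ (u i) (w i)) :
    ∃ c vc, RE ζ c vc ∧ ∏ i ∈ s, (1 + t * u i) = 1 + t * ∑ i ∈ s, u i + t ^ 2 * c := by
  classical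
  induction s using Finset.cons_induction with
  | empty => exact ⟨0, 0, by simpa [toRF] using RE_toRF ζ 0, by simp⟩
  | cons a s' hx ih =>
      obtain ⟨c, vc, hc, he⟩ := ih (fun i hi => hu i (by simp [hi]))
      refine ⟨c + u a * ∑ i ∈ s', u i + t * (u a * c), ?_, ?_, ?_⟩
      · exact vc + w a * ∑ i ∈ s', w i + vt * (w a * vc)
      · exact (hc.add ((hu a (by simp)).mul (RE.sum (fun i hi => hu i (by simp [hi]))))).add
          (ht.mul ((hu a (by simp)).mul hc))
      · rw [Finset.prod_cons, Finset.sum_cons, he]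
        ring

theorem qFermat_RE {n h : ℕ} (hn2 : n = 2 * h + 1) {ζ : K} (hζ : IsPrimitiveRoot ζ n) :
    RE ζ (qFermat n)
      ((1 - ζ) * ∑ j ∈ Finset.range h, ζ ^ (2 * j + 1) / (1 - ζ ^ (2 * j + 1))) := by
  have hn0 : 0 < n := by omega
  have hn1 : n - 1 = 2 * h := by omega
  set t : RatFunc ℚ := 1 - RatFunc.X ^ n with hT
  set u : ℕ → RatFunc ℚ := fun j => RatFunc.X ^ (2 * j + 1) / (1 - RatFunc.X ^ (2 * j + 1))
    with hu
  -- step 1 : product identity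
  have hprod : (∏ i ∈ Finset.range (n - 1), (1 - RatFunc.X ^ (2 * (i + 1)) : RatFunc ℚ)) /
      (∏ i ∈ Finset.range (n - 1), (1 - RatFunc.X ^ (i + 1))) =
      ∏ j ∈ Finset.range h, (1 + t * u j) := by
    rw [hn1]
    have hsplitP : (∏ i ∈ Finset.range (2 * h), (1 - RatFunc.X ^ (2 * (i + 1)) : RatFunc ℚ))
        = (∏ j ∈ Finset.range h, (1 - RatFunc.X ^ (2 * j + 1 + 1)))
          * ∏ j ∈ Finset.range h, (1 - RatFunc.X ^ (n + (2 * j + 1))) := by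
      have hP1 : (∏ j ∈ Finset.range h, (1 - RatFunc.X ^ (2 * (j + 1)) : RatFunc ℚ))
          = ∏ j ∈ Finset.range h, (1 - RatFunc.X ^ (2 * j + 1 + 1)) :=
        Finset.prod_congr rfl fun j _ => by rw [show 2 * (j + 1) = 2 * j + 1 + 1 by ring]
      have hP2 : (∏ j ∈ Finset.range h, (1 - RatFunc.X ^ (2 * (h + j + 1)) : RatFunc ℚ))
          = ∏ j ∈ Finset.range h, (1 - RatFunc.X ^ (n + (2 * j + 1))) :=
        Finset.prod_congr rfl fun j _ => by rw [show 2 * (h + j + 1) = n + (2 * j + 1) by omega]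
      rw [two_mul, Finset.prod_range_add, hP1, hP2]
    have hsplitD : (∏ i ∈ Finset.range (2 * h), (1 - RatFunc.X ^ (i + 1) : RatFunc ℚ))
        = (∏ j ∈ Finset.range h, (1 - RatFunc.X ^ (2 * j + 1)))
          * ∏ j ∈ Finset.range h, (1 - RatFunc.X ^ (2 * j + 1 + 1)) :=
      prod_range_two_mul h _
    rw [hsplitP, hsplitD]
    have hE : (∏ j ∈ Finset.range h, (1 - RatFunc.X ^ (2 * j + 1 + 1) : RatFunc ℚ)) ≠ 0 :=
      Finset.prod_ne_zero_iff.mpr fun j _ => one_sub_X_pow_ne (by omega)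
    have hO : (∏ j ∈ Finset.range h, (1 - RatFunc.X ^ (2 * j + 1) : RatFunc ℚ)) ≠ 0 :=
      Finset.prod_ne_zero_iff.mpr fun j _ => one_sub_X_pow_ne (by omega)
    rw [show (∏ j ∈ Finset.range h, (1 + t * u j))
        = (∏ j ∈ Finset.range h, (1 - RatFunc.X ^ (n + (2 * j + 1))))
          / ∏ j ∈ Finset.range h, (1 - RatFunc.X ^ (2 * j + 1)) from ?_]
    · field_simp
    · rw [← Finset.prod_div_distrib]
      refine Finset.prod_congr rfl fun j _ => ?_
      have hm : (1 - RatFunc.X ^ (2 * j + 1) : RatFunc ℚ) ≠ 0 := one_sub_X_pow_ne (by omega)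
      rw [hT, hu]
      field_simp
      ring
  -- step 2 : expansion
  have hune : ∀ j ∈ Finset.range h, (1 : K) - ζ ^ (2 * j + 1) ≠ 0 := by
    intro j hj
    rw [Finset.mem_range] at hj
    exact sub_ne_zero.mpr fun e => hζ.pow_ne_one_of_pos_of_lt (by omega) (by omega) e.symm
  have hREu : ∀ j ∈ Finset.range h, RE ζ (u j) (ζ ^ (2 * j + 1) / (1 - ζ ^ (2 * j + 1))) := by
    intro j hj
    exact ((RE_X ζ).pow _).div ((RE_one ζ).sub ((RE_X ζ).pow _)) (hune j hj)
  obtain ⟨c, vc, hc, he⟩ := prod_one_add_sq ζ (Finset.range h) t (1 - ζ ^ n)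
    ((RE_one ζ).sub ((RE_X ζ).pow n)) u _ hREu
  -- step 3 : rewrite qFermat
  have hq0 : qint n ≠ 0 := qint_ne hn0
  have hqf : qFermat n = (1 - RatFunc.X) * (∑ j ∈ Finset.range h, u j)
      + (1 - RatFunc.X) * (t * c) := by
    rw [qFermat, hprod, he, div_eq_iff hq0, hT]
    have hg := one_sub_X_qint n
    linear_combination (- (∑ j ∈ Finset.range h, u j) - (1 - RatFunc.X ^ n) * c) * hg

  -- step 4 : assemble
  have hv : ((1 : K) - ζ) * (∑ j ∈ Finset.range h, ζ ^ (2 * j + 1) / (1 - ζ ^ (2 * j + 1)))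
      + (1 - ζ) * ((1 - ζ ^ n) * vc)
      = (1 - ζ) * ∑ j ∈ Finset.range h, ζ ^ (2 * j + 1) / (1 - ζ ^ (2 * j + 1)) := by
    rw [hζ.pow_eq_one]
    ring
  rw [hqf, ← hv]
  exact ((((RE_one ζ).sub (RE_X ζ)).mul (RE.sum hREu))).add
    (((RE_one ζ).sub (RE_X ζ)).mul (((RE_one ζ).sub ((RE_X ζ).pow n)).mul hc))

end QF

-- ---------- arithmetic helpers ----------

theorem not_dvd_between {n m : ℕ} (h1 : n < m) (h2 : m < 2 * n) : ¬ n ∣ m := by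
  rintro ⟨c, rfl⟩
  rcases c with _ | _ | c
  · omega
  · omega
  · have : n * 2 ≤ n * (c + 1 + 1) := Nat.mul_le_mul_left n (by omega)
    omega

theorem final_alg {K : Type*} [Field K] (x w y S U H : K)
    (hx : x ≠ 0) (hw : w ≠ 0) (hy : y ≠ 0) :
    x⁻¹ * (-H - 2 * U - S) + -(x⁻¹ * (S - x / y)) - 1 / (x * w) * (-H * w)
      + 2 * (1 / (x * w) * (w * U)) + 2 * (1 / (x * w) * (w * S))
      - 1 / (x * w) * (w * (x / y)) = 0 := by
  have e1 : (1 : K) / (x * w) = x⁻¹ * w⁻¹ := by field_simp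
  have e2 : x / y = x * y⁻¹ := div_eq_mul_inv x y
  have e3 : w * w⁻¹ = 1 := mul_inv_cancel₀ hw
  rw [e1, e2]
  linear_combination (x⁻¹ * (H + 2 * U + 2 * S) - x⁻¹ * (x * y⁻¹)) * e3

theorem sum_split_last {K : Type*} [Field K] (g : ℕ → K) {m : ℕ} (hm : 0 < m) :
    ∑ i ∈ Finset.range m, g (1 + i) = (∑ i ∈ Finset.range (m - 1), g (1 + i)) + g m := by
  obtain ⟨m', rfl⟩ : ∃ m', m = m' + 1 := ⟨m - 1, by omega⟩
  rw [Finset.sum_range_succ, Nat.add_sub_cancel, Nat.add_comm 1 m']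

-- ---------- the final value computation ----------

theorem final_value {K : Type*} [Field K] [Algebra ℚ K] {α β h : ℕ}
    (hα : 0 < α) (heven : Even α) (hh : α + β + 1 = 2 * h + 1) {ζ : K}
    (hζ : IsPrimitiveRoot ζ (α + β + 1)) :
    ((∑ i ∈ Finset.range β, (-ζ) ^ (1 + i) / (1 - ζ ^ (1 + i + α))
        + ∑ i ∈ Finset.range (α - 1), (-ζ) ^ (1 + (β + 1 + i)) / (1 - ζ ^ (1 + (β + 1 + i) + α)))
      - (1 / (ζ ^ α * (1 - ζ)))
          * ((algebraMap ℚ K ((1 - ((α + β + 1 : ℕ) : ℚ)) / 2)) * (1 - ζ))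
      + 2 * ((1 / (ζ ^ α * (1 - ζ)))
          * ((1 - ζ) * ∑ j ∈ Finset.range h, ζ ^ (2 * j + 1) / (1 - ζ ^ (2 * j + 1))))
      + 2 * ((1 / (ζ ^ α * (1 - ζ)))
          * (∑ k ∈ Finset.Icc 1 α, (-ζ) ^ k / (∑ i ∈ Finset.range k, ζ ^ i)))
      - (1 / (ζ ^ α * (1 - ζ))) * (ζ ^ α / (∑ i ∈ Finset.range α, ζ ^ i))) = 0 := by
  obtain ⟨a, ha⟩ := id heven
  have hβe : Even β := Nat.even_iff.mpr (by omega)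
  have hoddβ1 : Odd (β + 1) := Even.add_one hβe
  have hζn : ζ ^ (α + β + 1) = 1 := hζ.pow_eq_one
  have hζ0 : ζ ≠ 0 := hζ.ne_zero (by omega)
  have hζa : (ζ : K) ^ α ≠ 0 := pow_ne_zero _ hζ0
  have hzm : ∀ m, 0 < m → m < α + β + 1 → (1 : K) - ζ ^ m ≠ 0 := fun m h1 h2 =>
    sub_ne_zero.mpr fun e => hζ.pow_ne_one_of_pos_of_lt h1.ne' h2 e.symm
  have h1ζ : (1 : K) - ζ ≠ 0 := by
    have := hzm 1 one_pos (by omega); simpa using this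
  have hgeom : ∀ k : ℕ, (∑ i ∈ Finset.range k, ζ ^ i) * (1 - ζ) = 1 - ζ ^ k := fun k => by
    linear_combination -(geom_sum_mul ζ k)
  have hqz : ∀ k, 0 < k → k < α + β + 1 → (∑ i ∈ Finset.range k, ζ ^ i) ≠ 0 :=
    fun k h1 h2 h0 => (hzm k h1 h2) (by rw [← hgeom k, h0, zero_mul])
  have hζab : ζ ^ α * ζ ^ (β + 1) = 1 := by
    rw [← pow_add, show α + (β + 1) = α + β + 1 by omega, hζn]
  have hζinv : (ζ ^ α)⁻¹ = ζ ^ (β + 1) := inv_eq_of_mul_eq_one_right hζab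
  -- T and star
  have hT : ∑ i ∈ Finset.range (α + β), (-ζ) ^ (1 + i) / (1 - ζ ^ (1 + i))
      = -(h : K) - 2 * ∑ j ∈ Finset.range h, ζ ^ (2 * j + 1) / (1 - ζ ^ (2 * j + 1)) := by
    rw [show α + β = 2 * h by omega]
    exact star_eq hζ hh
  have hTs : ∑ i ∈ Finset.range (α + β), (-ζ) ^ (1 + i) / (1 - ζ ^ (1 + i))
      = (∑ i ∈ Finset.range α, (-ζ) ^ (1 + i) / (1 - ζ ^ (1 + i)))
        + ∑ i ∈ Finset.range β, (-ζ) ^ (1 + (α + i)) / (1 - ζ ^ (1 + (α + i))) :=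
    Finset.sum_range_add _ α β
  -- S1 reindex
  have hS₁ : ∑ i ∈ Finset.range β, (-ζ) ^ (1 + i) / (1 - ζ ^ (1 + i + α))
      = (ζ ^ α)⁻¹ * ∑ i ∈ Finset.range β, (-ζ) ^ (1 + (α + i)) / (1 - ζ ^ (1 + (α + i))) := by
    rw [Finset.mul_sum]
    refine Finset.sum_congr rfl fun i hi => ?_
    rw [Finset.mem_range] at hi
    rw [show 1 + (α + i) = 1 + i + α by omega]
    have hz := hzm (1 + i + α) (by omega) (by omega)
    rw [pow_add (-ζ) (1 + i) α, heven.neg_pow]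
    field_simp
  -- S2 reindex
  have hS₂ : ∑ i ∈ Finset.range (α - 1),
        (-ζ) ^ (1 + (β + 1 + i)) / (1 - ζ ^ (1 + (β + 1 + i) + α))
      = -((ζ ^ α)⁻¹ * ∑ i ∈ Finset.range (α - 1), (-ζ) ^ (1 + i) / (1 - ζ ^ (1 + i))) := by
    rw [Finset.mul_sum, ← Finset.sum_neg_distrib]
    refine Finset.sum_congr rfl fun i hi => ?_
    rw [Finset.mem_range] at hi
    rw [show 1 + (β + 1 + i) + α = (α + β + 1) + (1 + i) by omega,
      pow_add ζ (α + β + 1) (1 + i), hζn, one_mul,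
      show 1 + (β + 1 + i) = (1 + i) + (β + 1) by omega,
      pow_add (-ζ) (1 + i) (β + 1), hoddβ1.neg_pow, hζinv]
    ring
  -- C3 rewrite
  have hC₃ : (∑ k ∈ Finset.Icc 1 α, (-ζ) ^ k / (∑ i ∈ Finset.range k, ζ ^ i))
      = (1 - ζ) * ∑ i ∈ Finset.range α, (-ζ) ^ (1 + i) / (1 - ζ ^ (1 + i)) := by
    rw [sum_Icc_one, Finset.mul_sum]
    refine Finset.sum_congr rfl fun i hi => ?_
    rw [Finset.mem_range] at hi
    have hz := hzm (1 + i) (by omega) (by omega)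
    have hq := hqz (1 + i) (by omega) (by omega)
    have hg := hgeom (1 + i)
    field_simp
    linear_combination ((-ζ) ^ (1 + i)) * hg + (2 * (-1) ^ i * ζ ^ (1 + i)) * hg
  -- split Σ_α
  have hSsplit : (∑ i ∈ Finset.range α, (-ζ) ^ (1 + i) / (1 - ζ ^ (1 + i)))
      = (∑ i ∈ Finset.range (α - 1), (-ζ) ^ (1 + i) / (1 - ζ ^ (1 + i)))
        + (-ζ) ^ α / (1 - ζ ^ α) :=
    sum_split_last (fun k => (-ζ) ^ k / (1 - ζ ^ k)) hα
  -- C5 rewrite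
  have hC₅ : (ζ ^ α / (∑ i ∈ Finset.range α, ζ ^ i))
      = (1 - ζ) * ((-ζ) ^ α / (1 - ζ ^ α)) := by
    have hg := hgeom α
    have hz := hzm α hα (by omega)
    have hq := hqz α hα (by omega)
    rw [heven.neg_pow]
    field_simp
    linear_combination (-1 : K) * hg
  -- the constant
  have hc₀ : algebraMap ℚ K ((1 - ((α + β + 1 : ℕ) : ℚ)) / 2) = -(h : K) := by
    have e : ((1 : ℚ) - ((α + β + 1 : ℕ) : ℚ)) / 2 = -(h : ℚ) := by
      have e2 : ((α + β + 1 : ℕ) : ℚ) = 2 * (h : ℚ) + 1 := by exact_mod_cast congrArg (Nat.cast : ℕ → ℚ) hh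
      rw [e2]; ring
    rw [e, map_neg, map_natCast]
  -- assemble
  rw [hS₁, hS₂, hC₃, hC₅, hc₀]
  have hE1 : (∑ i ∈ Finset.range β, (-ζ) ^ (1 + (α + i)) / (1 - ζ ^ (1 + (α + i))))
      = -(h : K) - 2 * (∑ j ∈ Finset.range h, ζ ^ (2 * j + 1) / (1 - ζ ^ (2 * j + 1)))
        - ∑ i ∈ Finset.range α, (-ζ) ^ (1 + i) / (1 - ζ ^ (1 + i)) := by
    linear_combination hT - hTs
  have hE2 : (∑ i ∈ Finset.range (α - 1), (-ζ) ^ (1 + i) / (1 - ζ ^ (1 + i)))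
      = (∑ i ∈ Finset.range α, (-ζ) ^ (1 + i) / (1 - ζ ^ (1 + i)))
        - (-ζ) ^ α / (1 - ζ ^ α) := by
    linear_combination -hSsplit
  have hzα : (1 : K) - ζ ^ α ≠ 0 := hzm α hα (by omega)
  rw [hE1, hE2, heven.neg_pow]
  exact final_alg (ζ ^ α) (1 - ζ) (1 - ζ ^ α)
    (∑ i ∈ Finset.range α, (-ζ) ^ (1 + i) / (1 - ζ ^ (1 + i)))
    (∑ j ∈ Finset.range h, ζ ^ (2 * j + 1) / (1 - ζ ^ (2 * j + 1)))
    ((h : K)) hζa h1ζ hzα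

theorem stmt_17 (n α : ℕ) (hn : 0 < n) (hodd : Odd n) (hα : 0 < α) (heven : Even α)
    (hαn : α < n) :
    phiCong n 1
      (∑ k ∈ Finset.Icc 1 (n - 1), (-RatFunc.X : RatFunc ℚ) ^ k / (1 - RatFunc.X ^ (k + α)))
      ((1 / (RatFunc.X ^ α * (1 - RatFunc.X)))
        * (RatFunc.C ((1 - (n : ℚ)) / 2) * (1 - RatFunc.X)
            - 2 * qFermat n
            - 2 * ∑ k ∈ Finset.Icc 1 α, (-RatFunc.X : RatFunc ℚ) ^ k / qint k
            - RatFunc.X ^ n * (1 - RatFunc.X) / (1 - RatFunc.X ^ n)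
            + RatFunc.X ^ α / qint α)) := by
  obtain ⟨β, hβ⟩ := Nat.exists_eq_add_of_lt hαn
  subst hβ
  obtain ⟨h, hh⟩ := hodd
  haveI : Fact (Irreducible (Polynomial.cyclotomic (α + β + 1) ℚ)) :=
    ⟨Polynomial.cyclotomic.irreducible_rat hn⟩
  apply phiCong_of_RE
  set ζ : AdjoinRoot (Polynomial.cyclotomic (α + β + 1) ℚ) :=
    AdjoinRoot.root (Polynomial.cyclotomic (α + β + 1) ℚ) with hζdef
  have hζ : IsPrimitiveRoot ζ (α + β + 1) := adjoinRoot_primitive _ hn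
  have hζ0 : ζ ≠ 0 := hζ.ne_zero (by omega)
  have hzm : ∀ m, 0 < m → m < α + β + 1 → (1 : AdjoinRoot (Polynomial.cyclotomic (α + β + 1) ℚ))
      - ζ ^ m ≠ 0 := fun m h1 h2 =>
    sub_ne_zero.mpr fun e => hζ.pow_ne_one_of_pos_of_lt h1.ne' h2 e.symm
  have hzm2 : ∀ m, α + β + 1 < m → m < 2 * (α + β + 1) →
      (1 : AdjoinRoot (Polynomial.cyclotomic (α + β + 1) ℚ)) - ζ ^ m ≠ 0 := fun m h1 h2 =>
    sub_ne_zero.mpr fun e =>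
      (not_dvd_between h1 h2) ((hζ.pow_eq_one_iff_dvd m).mp e.symm)
  have h1ζ : (1 : AdjoinRoot (Polynomial.cyclotomic (α + β + 1) ℚ)) - ζ ≠ 0 := by
    have := hzm 1 one_pos (by omega); simpa using this
  have hgeom : ∀ k : ℕ, (∑ i ∈ Finset.range k, ζ ^ i) * (1 - ζ) = 1 - ζ ^ k := fun k => by
    linear_combination -(geom_sum_mul ζ k)
  have hqz : ∀ k, 0 < k → k < α + β + 1 → (∑ i ∈ Finset.range k, ζ ^ i) ≠ 0 :=
    fun k h1 h2 h0 => (hzm k h1 h2) (by rw [← hgeom k, h0, zero_mul])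
  -- split of the left sum
  have hA : (∑ k ∈ Finset.Icc 1 (α + β + 1 - 1),
        (-RatFunc.X : RatFunc ℚ) ^ k / (1 - RatFunc.X ^ (k + α)))
      = ((∑ i ∈ Finset.range β,
            (-RatFunc.X : RatFunc ℚ) ^ (1 + i) / (1 - RatFunc.X ^ (1 + i + α)))
          + (-RatFunc.X : RatFunc ℚ) ^ (1 + β) / (1 - RatFunc.X ^ (1 + β + α)))
        + ∑ i ∈ Finset.range (α - 1),
            (-RatFunc.X : RatFunc ℚ) ^ (1 + (β + 1 + i)) / (1 - RatFunc.X ^ (1 + (β + 1 + i) + α)) := by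
    rw [show α + β + 1 - 1 = (β + 1) + (α - 1) by omega, sum_Icc_one,
      Finset.sum_range_add, Finset.sum_range_succ]
  -- the cancellation of singular parts
  have hoddβ : Odd (1 + β) := by
    obtain ⟨a, ha⟩ := id heven
    exact Nat.odd_iff.mpr (by omega)
  have hXa : (RatFunc.X : RatFunc ℚ) ^ α ≠ 0 := pow_ne_zero _ RatFunc.X_ne_zero
  have h1X : (1 - RatFunc.X : RatFunc ℚ) ≠ 0 := by
    have := one_sub_X_pow_ne (m := 1) one_pos; simpa using this
  have h1Xn : (1 - RatFunc.X ^ (α + β + 1) : RatFunc ℚ) ≠ 0 := one_sub_X_pow_ne (by omega)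
  have hcancel : (-RatFunc.X : RatFunc ℚ) ^ (1 + β) / (1 - RatFunc.X ^ (1 + β + α))
      + (1 / (RatFunc.X ^ α * (1 - RatFunc.X)))
        * (RatFunc.X ^ (α + β + 1) * (1 - RatFunc.X) / (1 - RatFunc.X ^ (α + β + 1))) = 0 := by
    rw [hoddβ.neg_pow, show 1 + β + α = α + β + 1 by omega]
    field_simp
    ring
  -- RE of all the pieces
  have REu : RE ζ (1 / (RatFunc.X ^ α * (1 - RatFunc.X))) (1 / (ζ ^ α * (1 - ζ))) :=
    (RE_one ζ).div (((RE_X ζ).pow α).mul ((RE_one ζ).sub (RE_X ζ)))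
      (mul_ne_zero (pow_ne_zero _ hζ0) h1ζ)
  have RES₁ : RE ζ
      (∑ i ∈ Finset.range β, (-RatFunc.X : RatFunc ℚ) ^ (1 + i) / (1 - RatFunc.X ^ (1 + i + α)))
      (∑ i ∈ Finset.range β, (-ζ) ^ (1 + i) / (1 - ζ ^ (1 + i + α))) :=
    RE.sum fun i hi => by
      rw [Finset.mem_range] at hi
      exact (((RE_X ζ).neg).pow (1 + i)).div ((RE_one ζ).sub ((RE_X ζ).pow (1 + i + α)))
        (hzm (1 + i + α) (by omega) (by omega))
  have RES₂ : RE ζ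
      (∑ i ∈ Finset.range (α - 1),
        (-RatFunc.X : RatFunc ℚ) ^ (1 + (β + 1 + i)) / (1 - RatFunc.X ^ (1 + (β + 1 + i) + α)))
      (∑ i ∈ Finset.range (α - 1), (-ζ) ^ (1 + (β + 1 + i)) / (1 - ζ ^ (1 + (β + 1 + i) + α))) :=
    RE.sum fun i hi => by
      rw [Finset.mem_range] at hi
      exact (((RE_X ζ).neg).pow (1 + (β + 1 + i))).div
        ((RE_one ζ).sub ((RE_X ζ).pow (1 + (β + 1 + i) + α)))
        (hzm2 (1 + (β + 1 + i) + α) (by omega) (by omega))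
  have REC₁ : RE ζ (RatFunc.C ((1 - ((α + β + 1 : ℕ) : ℚ)) / 2) * (1 - RatFunc.X))
      ((algebraMap ℚ (AdjoinRoot (Polynomial.cyclotomic (α + β + 1) ℚ))
        ((1 - ((α + β + 1 : ℕ) : ℚ)) / 2)) * (1 - ζ)) :=
    (RE_C ζ _).mul ((RE_one ζ).sub (RE_X ζ))
  have REQ := qFermat_RE hh hζ
  have REC₃ : RE ζ
      (∑ k ∈ Finset.Icc 1 α, (-RatFunc.X : RatFunc ℚ) ^ k / qint k)
      (∑ k ∈ Finset.Icc 1 α, (-ζ) ^ k / (∑ i ∈ Finset.range k, ζ ^ i)) :=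
    RE.sum fun k hk => by
      rw [Finset.mem_Icc] at hk
      exact (((RE_X ζ).neg).pow k).div (RE_qint ζ k) (hqz k (by omega) (by omega))
  have REC₅ : RE ζ (RatFunc.X ^ α / qint α) (ζ ^ α / (∑ i ∈ Finset.range α, ζ ^ i)) :=
    ((RE_X ζ).pow α).div (RE_qint ζ α) (hqz α (by omega) (by omega))
  have key := ((((RES₁.add RES₂).sub (REu.mul REC₁)).add
    ((RE_two ζ).mul (REu.mul REQ))).add ((RE_two ζ).mul (REu.mul REC₃))).sub (REu.mul REC₅)
  have hVD := final_value hα heven hh hζ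
  rw [hVD] at key
  rw [hA]
  exact RE.congr key (by linear_combination hcancel)
end
end
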